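/- Let A be a commutative Noetherian ring. Then the monoid ic(A) under I*J = \overline{IJ} is atomic: every integrally closed ideal I of A containing a nonzerodivisor with I != (1) can be written as I = \overline{I_1 I_2 \cdots I_k} for some k >= 1, where each I_i is a *-irreducible element of ic(A). -/

import Mathlib

/-- `x` satisfies an equation of integral dependence over the ideal `I`:
`x ^ n + a 1 * x ^ (n-1) + ⋯ + a (n-1) * x + a n = 0` with `a i ∈ I ^ i`. -/
def IsIntegralOverIdeal {A : Type*} [CommRing A] (I : Ideal A) (x : A) : Prop :=
  ∃ n : ℕ, 0 < n ∧ ∃ a : ℕ → A, (∀ i, 1 ≤ i → i ≤ n → a i ∈ I ^ i) ∧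
    x ^ n + ∑ i ∈ Finset.Icc 1 n, a i * x ^ (n - i) = 0

/-- The integral closure `\overline{I}` of an ideal `I`.  The set of elements integral
over `I` is in fact an ideal, so taking the ideal span of this set does not change it. -/
def intCl {A : Type*} [CommRing A] (I : Ideal A) : Ideal A :=
  Ideal.span {x | IsIntegralOverIdeal I x}

/-- Membership in the monoid `ic(A)`: integrally closed and contains a nonzerodivisor. -/
def MemIC {A : Type*} [CommRing A] (I : Ideal A) : Prop :=
  intCl I = I ∧ ∃ r ∈ I, r ∈ nonZeroDivisors A

/-- `*`-irreducible elements of `ic(A)`. -/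
def StarIrreducible {A : Type*} [CommRing A] (I : Ideal A) : Prop :=
  MemIC I ∧ I ≠ ⊤ ∧
    ∀ J K : Ideal A, MemIC J → MemIC K → I = intCl (J * K) → J = ⊤ ∨ K = ⊤

/-!
In a Noetherian ring, for `J` containing a nonzerodivisor, `x ∈ \overline{J}` iff `x T ≤ J T` for
some ideal `T` containing a nonzerodivisor: from an equation of degree `n` take
`T = (J + (x)) ^ (n - 1)`, and conversely apply Cayley–Hamilton to multiplication by `x` on `T`.
In this form `\overline{\overline{J} \overline{K}} = \overline{J K}` is immediate, and so is
cancellation: `J ≤ \overline{J K}` gives `J T ≤ K (J T)`, whence `K = (1)` by Nakayama, as `J T`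
contains a nonzerodivisor. So in a factorisation `I = \overline{J K}` with `J, K ≠ (1)` both factors
strictly contain `I`, and Noetherian induction on `I` factors it into `*`-irreducibles.
-/

open Polynomial

section

variable {A : Type*} [CommRing A]

def ContainsNZD (T : Ideal A) : Prop :=
  ∃ c ∈ T, c ∈ nonZeroDivisors A

namespace ContainsNZD

variable {T T' : Ideal A}

theorem top : ContainsNZD (⊤ : Ideal A) :=
  ⟨1, Submodule.mem_top, one_mem _⟩

theorem mono (hT : ContainsNZD T) (h : T ≤ T') : ContainsNZD T' :=
  let ⟨c, hc, hnzd⟩ := hT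
  ⟨c, h hc, hnzd⟩

theorem mul (hT : ContainsNZD T) (hT' : ContainsNZD T') : ContainsNZD (T * T') :=
  let ⟨c, hc, hcn⟩ := hT
  let ⟨d, hd, hdn⟩ := hT'
  ⟨c * d, Ideal.mul_mem_mul hc hd, mul_mem hcn hdn⟩

theorem pow (hT : ContainsNZD T) (n : ℕ) : ContainsNZD (T ^ n) := by
  induction n with
  | zero => simpa using top
  | succ n ih => simpa only [pow_succ] using ih.mul hT

theorem prod {ι : Type*} {s : Finset ι} {T : ι → Ideal A} (h : ∀ i ∈ s, ContainsNZD (T i)) :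
    ContainsNZD (∏ i ∈ s, T i) := by
  choose! c hc hcn using h
  exact ⟨∏ i ∈ s, c i, Ideal.prod_mem_prod hc, prod_mem hcn⟩

end ContainsNZD

theorem Ideal.sup_pow_succ_le (J S : Ideal A) (m : ℕ) :
    (J ⊔ S) ^ (m + 1) ≤ J * (J ⊔ S) ^ m ⊔ S ^ (m + 1) := by
  induction m with
  | zero => simp
  | succ m ih =>
    calc (J ⊔ S) ^ (m + 2) = J * (J ⊔ S) ^ (m + 1) ⊔ S * (J ⊔ S) ^ (m + 1) := by
          rw [pow_succ' _ (m + 1), Ideal.sup_mul]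
      _ ≤ J * (J ⊔ S) ^ (m + 1) ⊔ S * (J * (J ⊔ S) ^ m ⊔ S ^ (m + 1)) :=
          sup_le_sup_left (Ideal.mul_mono_right ih) _
      _ = J * (S * (J ⊔ S) ^ m) ⊔ J * (J ⊔ S) ^ (m + 1) ⊔ S ^ (m + 2) := by
          rw [Ideal.mul_sup, ← pow_succ', ← sup_assoc, sup_comm (J * _), mul_left_comm]
      _ ≤ J * (J ⊔ S) ^ (m + 1) ⊔ S ^ (m + 2) := by
          refine sup_le_sup_right (sup_le (Ideal.mul_mono_right ?_) le_rfl) _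
          rw [pow_succ']
          exact Ideal.mul_mono_left le_sup_right

theorem Ideal.pow_succ_mul_pow_le (J S : Ideal A) {i m : ℕ} (hi : i ≤ m) :
    J ^ (i + 1) * S ^ (m - i) ≤ J * (J ⊔ S) ^ m := by
  calc J ^ (i + 1) * S ^ (m - i) = J * (J ^ i * S ^ (m - i)) := by ring
    _ ≤ J * ((J ⊔ S) ^ i * (J ⊔ S) ^ (m - i)) :=
        Ideal.mul_mono_right (Ideal.mul_mono (Ideal.pow_right_mono le_sup_left i)
          (Ideal.pow_right_mono le_sup_right _))
    _ = J * (J ⊔ S) ^ m := by rw [← pow_add, Nat.add_sub_cancel' hi]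

theorem Ideal.eq_top_of_le_mul_self {K N : Ideal A} (hN : N.FG) (hNZ : ContainsNZD N)
    (h : N ≤ K * N) : K = ⊤ := by
  obtain ⟨r, hr1, hr0⟩ := Submodule.exists_sub_one_mem_and_smul_eq_zero_of_fg_of_le_smul K N hN h
  obtain ⟨c, hcN, hc⟩ := hNZ
  have hr : r = 0 := mem_nonZeroDivisors_iff_right.1 hc r (hr0 c hcN)
  rw [Ideal.eq_top_iff_one, ← neg_mem_iff]
  simpa [hr] using hr1

/-- For `J` containing a nonzerodivisor in a Noetherian ring, this is the determinantal criterion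
for `M ≤ \overline{J}` (see `intCl_eq_witnessCl`). -/
def WitnessLE (M J : Ideal A) : Prop :=
  ∃ T : Ideal A, ContainsNZD T ∧ M * T ≤ J * T

namespace WitnessLE

variable {M N J K : Ideal A}

theorem of_le (h : M ≤ J) : WitnessLE M J :=
  ⟨⊤, ContainsNZD.top, Ideal.mul_mono_left h⟩

theorem mono_left (h : WitnessLE M J) (hNM : N ≤ M) : WitnessLE N J :=
  let ⟨T, hT, hle⟩ := h
  ⟨T, hT, (Ideal.mul_mono_left hNM).trans hle⟩

theorem trans (hMJ : WitnessLE M J) (hJK : WitnessLE J K) : WitnessLE M K := by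
  obtain ⟨T, hT, hMT⟩ := hMJ
  obtain ⟨U, hU, hJU⟩ := hJK
  refine ⟨T * U, hT.mul hU, ?_⟩
  calc M * (T * U) = M * T * U := (mul_assoc _ _ _).symm
    _ ≤ J * T * U := Ideal.mul_mono_left hMT
    _ = J * U * T := by ring
    _ ≤ K * U * T := Ideal.mul_mono_left hJU
    _ = K * (T * U) := by ring

theorem mul (hMJ : WitnessLE M J) (hNK : WitnessLE N K) : WitnessLE (M * N) (J * K) := by
  obtain ⟨T, hT, hMT⟩ := hMJ
  obtain ⟨U, hU, hNU⟩ := hNK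
  refine ⟨T * U, hT.mul hU, ?_⟩
  calc M * N * (T * U) = (M * T) * (N * U) := by ring
    _ ≤ (J * T) * (K * U) := Ideal.mul_mono hMT hNU
    _ = J * K * (T * U) := by ring

theorem sup (hM : WitnessLE M J) (hN : WitnessLE N J) : WitnessLE (M ⊔ N) J := by
  obtain ⟨T, hT, hMT⟩ := hM
  obtain ⟨U, hU, hNU⟩ := hN
  refine ⟨T * U, hT.mul hU, ?_⟩
  rw [Ideal.sup_mul]
  refine sup_le ?_ ?_
  · calc M * (T * U) = M * T * U := (mul_assoc _ _ _).symm
      _ ≤ J * T * U := Ideal.mul_mono_left hMT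
      _ = J * (T * U) := mul_assoc _ _ _
  · calc N * (T * U) = N * U * T := by ring
      _ ≤ J * U * T := Ideal.mul_mono_left hNU
      _ = J * (T * U) := by ring

end WitnessLE

def witnessCl (J : Ideal A) : Ideal A where
  carrier := {x | WitnessLE (Ideal.span {x}) J}
  zero_mem' := .of_le (by simp)
  add_mem' {x y} hx hy := (hx.sup hy).mono_left <| by
    rw [Ideal.span_singleton_le_iff_mem]
    exact Submodule.add_mem_sup (Ideal.mem_span_singleton_self x) (Ideal.mem_span_singleton_self y)
  smul_mem' a x hx := hx.mono_left <| Ideal.span_singleton_le_span_singleton.2 (dvd_mul_left x a)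

theorem WitnessLE.of_fg_le_witnessCl {M J : Ideal A} (hM : M.FG) (h : M ≤ witnessCl J) :
    WitnessLE M J := by
  induction M, hM using Submodule.fg_induction with
  | singleton x => exact h (Ideal.mem_span_singleton_self x)
  | sup M N _ _ ihM ihN => exact (ihM (le_sup_left.trans h)).sup (ihN (le_sup_right.trans h))

theorem le_witnessCl_iff [IsNoetherianRing A] {M J : Ideal A} :
    M ≤ witnessCl J ↔ WitnessLE M J :=
  ⟨WitnessLE.of_fg_le_witnessCl (IsNoetherian.noetherian M),
    fun h _ hx => h.mono_left ((Ideal.span_singleton_le_iff_mem M).2 hx)⟩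

theorem witnessLE_witnessCl [IsNoetherianRing A] (J : Ideal A) : WitnessLE (witnessCl J) J :=
  le_witnessCl_iff.1 le_rfl

theorem Polynomial.Monic.eval_eq_pow_add_sum {q : A[X]} (hq : q.Monic) (x : A) :
    q.eval x = x ^ q.natDegree +
      ∑ i ∈ Finset.Icc 1 q.natDegree, q.coeff (q.natDegree - i) * x ^ (q.natDegree - i) := by
  rw [eval_eq_sum_range, Finset.sum_range_succ, hq.coeff_natDegree, one_mul, add_comm,
    ← Finset.Ico_add_one_right_eq_Icc, Finset.sum_Ico_eq_sum_range, Nat.add_sub_cancel]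
  simp only [← Nat.sub_sub]
  rw [Finset.sum_range_reflect (fun k => q.coeff k * x ^ k)]

theorem isIntegralOverIdeal_of_monic {J : Ideal A} {p : A[X]} (hp : p.Monic)
    (hcoeff : ∀ k, p.coeff k ∈ J ^ (p.natDegree - k)) {x : A} (hx : p.eval x = 0) :
    IsIntegralOverIdeal J x := by
  rcases subsingleton_or_nontrivial A with _ | _
  · exact ⟨1, one_pos, 0, fun _ _ _ => zero_mem _, Subsingleton.elim _ _⟩
  -- `p * X` has positive degree, as `IsIntegralOverIdeal` demands
  set q := p * X
  have hq : q.Monic := hp.mul monic_X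
  have hqdeg : q.natDegree = p.natDegree + 1 := natDegree_mul_X hp.ne_zero
  have hqcoeff : ∀ k, q.coeff k ∈ J ^ (q.natDegree - k) := by
    rintro (_ | k)
    · simp [q]
    · rw [coeff_mul_X, hqdeg, Nat.add_sub_add_right]
      exact hcoeff k
  refine ⟨q.natDegree, by omega, fun i => q.coeff (q.natDegree - i), fun i _ hi => ?_, ?_⟩
  · simpa [Nat.sub_sub_self hi] using hqcoeff (q.natDegree - i)
  · rw [← hq.eval_eq_pow_add_sum, eval_mul, hx, zero_mul]

theorem isIntegralOverIdeal_of_span_mul_le {J T : Ideal A} (hT : T.FG) (hTZ : ContainsNZD T)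
    {x : A} (h : Ideal.span {x} * T ≤ J * T) : IsIntegralOverIdeal J x := by
  have : Module.Finite A T := Module.Finite.iff_fg.mpr hT
  set φ := algebraMap A (Module.End A T) x
  have hφ : LinearMap.range φ ≤ J • ⊤ := by
    rintro _ ⟨t, rfl⟩
    rw [Submodule.mem_smul_top_iff, Ideal.smul_eq_mul]
    exact h (Ideal.mul_mem_mul (Ideal.mem_span_singleton_self x) t.2)
  obtain ⟨p, hp, -, hcoeff, hpφ⟩ :=
    LinearMap.exists_monic_and_natDegree_eq_and_coeff_mem_pow_and_aeval_eq_zero A φ J hφ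
  refine isIntegralOverIdeal_of_monic hp hcoeff ?_
  obtain ⟨c, hcT, hc⟩ := hTZ
  have hpc : p.eval x • (⟨c, hcT⟩ : T) = 0 := by
    rw [← Module.algebraMap_end_apply A A, ← coe_aeval_eq_eval, ← aeval_algebraMap_apply, hpφ]
    rfl
  exact mem_nonZeroDivisors_iff_right.1 hc _ (congrArg Subtype.val hpc)

theorem witnessLE_span_of_isIntegralOverIdeal {J : Ideal A} (hJ : ContainsNZD J) {x : A}
    (hx : IsIntegralOverIdeal J x) : WitnessLE (Ideal.span {x}) J := by
  obtain ⟨n, hn, a, ha, heq⟩ := hx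
  obtain ⟨m, rfl⟩ : ∃ m, n = m + 1 := ⟨n - 1, by omega⟩
  set S := Ideal.span {x}
  set T := (J ⊔ S) ^ m
  have hxn : x ^ (m + 1) ∈ J * T := by
    rw [eq_neg_of_add_eq_zero_left heq]
    refine neg_mem (Submodule.sum_mem _ fun i hi => ?_)
    obtain ⟨hi1, him⟩ := Finset.mem_Icc.1 hi
    obtain ⟨i, rfl⟩ : ∃ i', i = i' + 1 := ⟨i - 1, by omega⟩
    refine Ideal.pow_succ_mul_pow_le J S (by omega : i ≤ m) (Ideal.mul_mem_mul (ha _ hi1 him) ?_)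
    rw [Nat.add_sub_add_right, Ideal.span_singleton_pow]
    exact Ideal.mem_span_singleton_self _
  refine ⟨T, hJ.mono le_sup_left |>.pow m, ?_⟩
  calc S * T ≤ (J ⊔ S) ^ (m + 1) := by rw [pow_succ']; exact Ideal.mul_mono_left le_sup_right
    _ ≤ J * T ⊔ S ^ (m + 1) := Ideal.sup_pow_succ_le J S m
    _ ≤ J * T := by
        rw [Ideal.span_singleton_pow, sup_le_iff, Ideal.span_singleton_le_iff_mem]
        exact ⟨le_rfl, hxn⟩

theorem le_intCl (J : Ideal A) : J ≤ intCl J := fun x hx =>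
  Ideal.subset_span ⟨1, one_pos, fun _ => -x, fun i h1 h2 => by
    obtain rfl : i = 1 := le_antisymm h2 h1
    simpa using hx, by simp⟩

theorem intCl_mono {J K : Ideal A} (h : J ≤ K) : intCl J ≤ intCl K :=
  Ideal.span_mono fun _ ⟨n, hn, a, ha, heq⟩ =>
    ⟨n, hn, a, fun i h1 h2 => Ideal.pow_right_mono h i (ha i h1 h2), heq⟩

theorem intCl_eq_witnessCl [IsNoetherianRing A] {J : Ideal A} (hJ : ContainsNZD J) :
    intCl J = witnessCl J := by
  refine le_antisymm (Ideal.span_le.2 fun x hx => witnessLE_span_of_isIntegralOverIdeal hJ hx) ?_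
  rintro x ⟨T, hT, hxT⟩
  exact Ideal.subset_span (isIntegralOverIdeal_of_span_mul_le (IsNoetherian.noetherian T) hT hxT)

theorem intCl_mul_intCl [IsNoetherianRing A] {J K : Ideal A} (hJ : ContainsNZD J)
    (hK : ContainsNZD K) : intCl (intCl J * intCl K) = intCl (J * K) := by
  have hJK : J * K ≤ intCl J * intCl K := Ideal.mul_mono (le_intCl J) (le_intCl K)
  refine le_antisymm ?_ (intCl_mono hJK)
  rw [intCl_eq_witnessCl ((hJ.mul hK).mono hJK), intCl_eq_witnessCl (hJ.mul hK),
    intCl_eq_witnessCl hJ, intCl_eq_witnessCl hK, le_witnessCl_iff]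
  exact (witnessLE_witnessCl _).trans ((witnessLE_witnessCl J).mul (witnessLE_witnessCl K))

theorem eq_top_of_le_intCl_mul [IsNoetherianRing A] {J K : Ideal A} (hJ : ContainsNZD J)
    (hK : ContainsNZD K) (h : J ≤ intCl (J * K)) : K = ⊤ := by
  rw [intCl_eq_witnessCl (hJ.mul hK), le_witnessCl_iff] at h
  obtain ⟨T, hT, hJT⟩ := h
  refine Ideal.eq_top_of_le_mul_self (IsNoetherian.noetherian (J * T)) (hJ.mul hT) ?_
  calc J * T ≤ J * K * T := hJT
    _ = K * (J * T) := by ring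

theorem lt_of_eq_intCl_mul [IsNoetherianRing A] {I J K : Ideal A} (hJ : MemIC J) (hK : MemIC K)
    (hI : I = intCl (J * K)) (hKtop : K ≠ ⊤) : I < J := by
  refine lt_of_le_of_ne ?_ fun hIJ => hKtop (eq_top_of_le_intCl_mul hJ.2 hK.2 ?_)
  · exact hI ▸ (intCl_mono Ideal.mul_le_left).trans hJ.1.le
  · exact (hIJ ▸ hI).le

def IsIntClProdOfStarIrreducible (I : Ideal A) : Prop :=
  ∃ k : ℕ, 1 ≤ k ∧ ∃ f : Fin k → Ideal A, (∀ i, StarIrreducible (f i)) ∧ I = intCl (∏ i, f i)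

theorem StarIrreducible.isIntClProd {I : Ideal A} (hI : StarIrreducible I) :
    IsIntClProdOfStarIrreducible I :=
  ⟨1, le_rfl, fun _ => I, fun _ => hI, by simp [hI.1.1]⟩

theorem IsIntClProdOfStarIrreducible.intCl_mul [IsNoetherianRing A] {J K : Ideal A}
    (hJ : IsIntClProdOfStarIrreducible J) (hK : IsIntClProdOfStarIrreducible K) :
    IsIntClProdOfStarIrreducible (intCl (J * K)) := by
  obtain ⟨k, hk, f, hf, rfl⟩ := hJ
  obtain ⟨l, -, g, hg, rfl⟩ := hK
  refine ⟨k + l, by omega, Fin.append f g, Fin.addCases (by simpa using hf) (by simpa using hg), ?_⟩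
  rw [Fin.prod_univ_add, intCl_mul_intCl]
  · simp
  · exact ContainsNZD.prod fun i _ => (hf i).1.2
  · exact ContainsNZD.prod fun i _ => (hg i).1.2

end

/-- `ic(A)` is atomic: every non-unit element factors into `*`-irreducibles. -/
theorem ic_atomic {A : Type*} [CommRing A] [IsNoetherianRing A] (I : Ideal A)
    (hI : MemIC I) (hne : I ≠ ⊤) :
    ∃ k : ℕ, 1 ≤ k ∧ ∃ f : Fin k → Ideal A,
      (∀ i, StarIrreducible (f i)) ∧ I = intCl (∏ i, f i) := by
  induction I using IsNoetherian.induction with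
  | hgt I ih =>
    by_cases hirr : StarIrreducible I
    · exact hirr.isIntClProd
    obtain ⟨J, K, hJ, hK, hIJK, hJtop, hKtop⟩ :
        ∃ J K, MemIC J ∧ MemIC K ∧ I = intCl (J * K) ∧ J ≠ ⊤ ∧ K ≠ ⊤ := by
      simpa [StarIrreducible, hI, hne] using hirr
    have hIJ : I < J := lt_of_eq_intCl_mul hJ hK hIJK hKtop
    have hIK : I < K := lt_of_eq_intCl_mul hK hJ (mul_comm J K ▸ hIJK) hJtop
    rw [hIJK]
    exact IsIntClProdOfStarIrreducible.intCl_mul (ih J hIJ hJ hJtop) (ih K hIK hK hKtop)
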